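/- If E ⊂ ℝ² is star-shaped with respect to a closed ball B(c, r) with r > 0 (i.e., for every x ∈ E and every y ∈ B(c, r), the segment [y, x] ⊆ E), and e is a segment contained in the closure of E with both endpoints on the boundary of E, then the distance from c to the line containing e is at least r. -/

import Mathlib

/-!
If the line through `p` and `q` came closer than `r` to `c`, it would meet the open ball `B(c, r)`
at some `z`. One of the endpoints `x` of the edge satisfies: the midpoint of the edge lies on the
half-open segment `[z, x)`. Since `E` is star-shaped with respect to every point of a neighbourhood
of `z`, such half-open segments towards points of `closure E` stay inside `E`; but the midpoint is on
`∂E`, which an open set does not meet.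
-/

open Metric Set AffineMap

section StarConvex

variable {𝕜 V : Type*} [Field 𝕜] [LinearOrder 𝕜] [IsStrictOrderedRing 𝕜]
  [AddCommGroup V] [Module 𝕜 V] [TopologicalSpace V] [IsTopologicalAddGroup V]
  [ContinuousConstSMul 𝕜 V]

theorem lineMap_mem_of_forall_starConvex_of_mem_closure {B E : Set V} (hB : IsOpen B)
    (hE : ∀ y ∈ B, StarConvex 𝕜 y E) {z x : V} (hz : z ∈ B) (hx : x ∈ closure E)
    {s : 𝕜} (hs : s ∈ Ico 0 1) : lineMap z x s ∈ E := by
  have hs₁ : 1 - s ≠ 0 := sub_ne_zero.2 hs.2.ne'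
  set w := lineMap z x s
  -- `w = (1 - s) • f x' + s • x'` for every `x'`, and `f x = z`.
  let f : V → V := fun x' ↦ (1 - s)⁻¹ • (w - s • x')
  have hf : Continuous f := (continuous_const.sub (continuous_const_smul s)).const_smul _
  have hfx : f x = z := by
    simp only [f, w, lineMap_apply_module, add_sub_cancel_right, inv_smul_smul₀ hs₁]
  obtain ⟨x', hx'B, hx'E⟩ :=
    mem_closure_iff.1 hx _ (hB.preimage hf) (show f x ∈ B from hfx ▸ hz)
  have hw : (1 - s) • f x' + s • x' = w := by
    simp only [f, smul_inv_smul₀ hs₁, sub_add_cancel]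
  exact hw ▸ hE _ hx'B hx'E (sub_nonneg.2 hs.2.le) hs.1 (sub_add_cancel 1 s)

end StarConvex

section Midpoint

variable {V : Type*} [AddCommGroup V] [Module ℝ V]

theorem exists_lineMap_lineMap_right_eq_midpoint (p q : V) {a : ℝ} (ha : a ≤ 1 / 2) :
    ∃ s ∈ Ico (0 : ℝ) 1, lineMap (lineMap p q a) q s = midpoint ℝ p q := by
  have ha₁ : 0 < 1 - a := by linarith
  refine ⟨(1 / 2 - a) / (1 - a), ⟨by apply div_nonneg <;> linarith, by
    rw [div_lt_one ha₁]; linarith⟩, ?_⟩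
  simp only [midpoint, lineMap_apply_module, invOf_eq_inv]
  match_scalars <;> field_simp <;> ring

theorem exists_lineMap_eq_midpoint_of_mem_affineSpan_pair {p q z : V}
    (hz : z ∈ line[ℝ, p, q]) :
    ∃ x ∈ ({p, q} : Set V), ∃ s ∈ Ico (0 : ℝ) 1, lineMap z x s = midpoint ℝ p q := by
  obtain ⟨a, rfl⟩ := mem_affineSpan_pair_iff_exists_lineMap_eq.1 hz
  rcases le_total a (1 / 2) with ha | ha
  · exact ⟨q, by simp, exists_lineMap_lineMap_right_eq_midpoint p q ha⟩
  · refine ⟨p, by simp, ?_⟩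
    rw [← lineMap_apply_one_sub, midpoint_comm]
    exact exists_lineMap_lineMap_right_eq_midpoint q p (by linarith)

end Midpoint

theorem dist_center_to_edge_line_general (E : Set (EuclideanSpace ℝ (Fin 2)))
    (hEopen : IsOpen E)
    (c : EuclideanSpace ℝ (Fin 2)) (r : ℝ)
    (hstar : ∀ x ∈ E, ∀ y ∈ closedBall c r, segment ℝ y x ⊆ E)
    (p q : EuclideanSpace ℝ (Fin 2))
    (hedge : segment ℝ p q ⊆ frontier E) :
    r ≤ Metric.infDist c
        ((affineSpan ℝ ({p, q} : Set (EuclideanSpace ℝ (Fin 2)))) :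
          Set (EuclideanSpace ℝ (Fin 2))) := by
  by_contra! hlt
  obtain ⟨z, hzL, hz⟩ := (infDist_lt_iff ⟨p, left_mem_affineSpan_pair ℝ p q⟩).1 hlt
  obtain ⟨x, hx, s, hs, hmid⟩ := exists_lineMap_eq_midpoint_of_mem_affineSpan_pair hzL
  have hxE : x ∈ closure E := by
    refine frontier_subset_closure (hedge ?_)
    rcases hx with rfl | rfl
    exacts [left_mem_segment ℝ _ _, right_mem_segment ℝ _ _]
  have hstar' : ∀ y ∈ ball c r, StarConvex ℝ y E := fun y hy ↦
    starConvex_iff_segment_subset.2 fun x hx ↦ hstar x hx y (ball_subset_closedBall hy)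
  have hmidE : midpoint ℝ p q ∈ E :=
    hmid ▸ lineMap_mem_of_forall_starConvex_of_mem_closure isOpen_ball hstar'
      (mem_ball'.2 hz) hxE hs
  exact (hEopen.frontier_eq ▸ hedge (midpoint_mem_segment p q)).2 hmidE

/-- If `E ⊂ ℝ²` is open and bounded and star-shaped with respect to the closed
ball `B(c, r) ⊆ E` with `r > 0`, and `e` is a nondegenerate boundary edge of
`E` (a segment with endpoints `p ≠ q` contained in `∂E`), then the distance
from `c` to the line containing `e` is at least `r`. -/
theorem dist_center_to_edge_line (E : Set (EuclideanSpace ℝ (Fin 2)))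
    (hEopen : IsOpen E) (hEbdd : Bornology.IsBounded E)
    (c : EuclideanSpace ℝ (Fin 2)) (r : ℝ) (hr : 0 < r)
    (hball : closedBall c r ⊆ E)
    (hstar : ∀ x ∈ E, ∀ y ∈ closedBall c r, segment ℝ y x ⊆ E)
    (p q : EuclideanSpace ℝ (Fin 2)) (hpq : p ≠ q)
    (hedge : segment ℝ p q ⊆ frontier E) :
    r ≤ Metric.infDist c
        ((affineSpan ℝ ({p, q} : Set (EuclideanSpace ℝ (Fin 2)))) :
          Set (EuclideanSpace ℝ (Fin 2))) :=
  dist_center_to_edge_line_general E hEopen c r hstar p q hedge
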